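/- For 0 ≤ t ≤ 1 and β ≤ 1/2, the function g(t) = (β/2)·t² + log((1+√(1-t²))/2) satisfies g(t) ≤ 0 = g(0); moreover for β > 1/2 there exists t ∈ (0,1] with g(t) > 0. -/
import Mathlib


theorem ell1_variational (β : ℝ) (hβ : 0 < β) :
    (β ≤ 1/2 → ∀ t ∈ Set.Icc (0:ℝ) 1,
      β / 2 * t ^ 2 + Real.log ((1 + Real.sqrt (1 - t ^ 2)) / 2) ≤ 0) ∧
    (β / 2 * (0:ℝ) ^ 2 + Real.log ((1 + Real.sqrt (1 - (0:ℝ) ^ 2)) / 2) = 0) ∧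
    (1/2 < β → ∃ t ∈ Set.Ioc (0:ℝ) 1,
      0 < β / 2 * t ^ 2 + Real.log ((1 + Real.sqrt (1 - t ^ 2)) / 2)) := by
  refine ⟨?_, by norm_num, ?_⟩
  · intro hβle t ht
    obtain ⟨ht0, ht1⟩ := ht
    have h1t : (0:ℝ) ≤ 1 - t ^ 2 := by nlinarith
    set s := Real.sqrt (1 - t ^ 2) with hs
    have hs0 : 0 ≤ s := Real.sqrt_nonneg _
    have hs2 : s ^ 2 = 1 - t ^ 2 := Real.sq_sqrt h1t
    have hpos : (0:ℝ) < (1 + s) / 2 := by linarith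
    have hlog : Real.log ((1 + s) / 2) ≤ (1 + s) / 2 - 1 :=
      Real.log_le_sub_one_of_pos hpos
    nlinarith [sq_nonneg (1 - s), sq_nonneg t]
  · intro hβ2
    have h2β : (0:ℝ) < 2 / β := by positivity
    have hc2 : (Real.sqrt (2/β)) ^ 2 = 2/β := Real.sq_sqrt h2β.le
    set c := Real.sqrt (2/β) with hc
    have hc0 : 0 ≤ c := Real.sqrt_nonneg _
    have hβ4 : 2 / β < 4 := by
      rw [div_lt_iff₀ hβ]; linarith
    have hclt2 : c < 2 := by nlinarith
    set a := max (c - 1) 0 with ha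
    have ha0 : 0 ≤ a := le_max_right _ _
    have hac : c - 1 ≤ a := le_max_left _ _
    have ha1 : a < 1 := by
      rcases max_cases (c - 1) 0 with ⟨h, _⟩ | ⟨h, _⟩ <;> rw [ha, h] <;> linarith
    set s := (1 + a) / 2 with hsdef
    have hs_lt1 : s < 1 := by rw [hsdef]; linarith
    have hs_pos : 0 < s := by rw [hsdef]; linarith
    have hsa : a < s := by rw [hsdef]; linarith
    have h1s2 : 0 < 1 - s ^ 2 := by nlinarith
    have h1s2' : 1 - s ^ 2 ≤ 1 := by nlinarith
    refine ⟨Real.sqrt (1 - s ^ 2), ⟨Real.sqrt_pos.mpr h1s2, ?_⟩, ?_⟩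
    · calc Real.sqrt (1 - s ^ 2) ≤ Real.sqrt 1 := Real.sqrt_le_sqrt h1s2'
        _ = 1 := Real.sqrt_one
    · have ht2 : Real.sqrt (1 - s ^ 2) ^ 2 = 1 - s ^ 2 := Real.sq_sqrt h1s2.le
      rw [ht2]
      have hback : Real.sqrt (1 - (1 - s ^ 2)) = s := by
        rw [show 1 - (1 - s ^ 2) = s ^ 2 by ring, Real.sqrt_sq hs_pos.le]
      rw [hback]
      -- lower bound on log: log((1+s)/2) ≥ 1 - 2/(1+s)
      have h1s : (0:ℝ) < 1 + s := by linarith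
      have hlog2 : Real.log (2 / (1 + s)) ≤ 2 / (1 + s) - 1 :=
        Real.log_le_sub_one_of_pos (by positivity)
      have hloginv : Real.log ((1 + s) / 2) = - Real.log (2 / (1 + s)) := by
        rw [← Real.log_inv]; congr 1; field_simp
      have hlog : 1 - 2 / (1 + s) ≤ Real.log ((1 + s) / 2) := by
        rw [hloginv]; linarith
      -- (1+s) > c, so (1+s)^2 > 2/β
      have hsc : c < 1 + s := by linarith
      have hsq : 2 / β < (1 + s) ^ 2 := by nlinarith
      have hβsq : 2 < β * (1 + s) ^ 2 := by
        rw [div_lt_iff₀ hβ] at hsq; linarith [hsq]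
      have hdiv : 2 / (1 + s) = 2 / (1 + s) := rfl
      have key : 0 < β / 2 * (1 - s ^ 2) + (1 - 2 / (1 + s)) := by
        rw [show (1:ℝ) - 2 / (1 + s) = ((1 + s) - 2) / (1 + s) by field_simp]
        have h2 : ((1 + s) - 2) / (1 + s) = (s - 1) / (1 + s) := by ring_nf
        rw [h2]
        have expand : β / 2 * (1 - s ^ 2) + (s - 1) / (1 + s)
            = (1 - s) * (β * (1 + s) ^ 2 - 2) / (2 * (1 + s)) := by
          field_simp; ring
        rw [expand]
        apply div_pos
        · apply mul_pos (by linarith); linarith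
        · linarith
      linarith
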